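/- For an invertible lower-triangular n×n matrix L, (E·(I ⊗ L)·D)⁻¹ = E·(I ⊗ L⁻¹)·D, where E and D are the elimination and duplication matrices. -/

import Mathlib

open Matrix
open scoped Kronecker

/-- `vec` stacks the columns of a matrix: entry `(j, i)` is `A i j`. -/
def vecOp {n : ℕ} (A : Matrix (Fin n) (Fin n) ℝ) : Fin n × Fin n → ℝ :=
  fun p => A p.2 p.1
/-- Index pairs `(i, j)` with `j ≤ i`. -/
abbrev SymIdx (n : ℕ) := {p : Fin n × Fin n // p.2 ≤ p.1}

/-- Elimination matrix: row `(i,j)` (with `j ≤ i`) is `vec(1_{ji})ᵀ`. -/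
def elimMat (n : ℕ) : Matrix (SymIdx n) (Fin n × Fin n) ℝ :=
  fun r c => Matrix.single r.val.2 r.val.1 (1 : ℝ) c.2 c.1

/-- Duplication matrix: column `(k,ℓ)` (with `ℓ ≤ k`) is
`vec((1 - δ_{kℓ}) 1_{kℓ} + 1_{ℓk})`. -/
def dupMat (n : ℕ) : Matrix (Fin n × Fin n) (SymIdx n) ℝ :=
  fun r c =>
    ((if c.val.1 = c.val.2 then (0 : ℝ) else 1) • Matrix.single c.val.1 c.val.2 (1 : ℝ)
      + Matrix.single c.val.2 c.val.1 (1 : ℝ)) r.2 r.1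

/-!
`E · X · D` is the compression of `X` to the index pairs `(i, j)` with `j ≤ i` as soon as `X`
maps no such pair to a pair `(k, l)` with `k < l`. This holds for `I ⊗ A` with `A` lower
triangular, and the product of two such compressions is the compression of the product, so
`A ↦ E · (I ⊗ A) · D` is multiplicative and unital on lower-triangular matrices. Since `L⁻¹`
is lower triangular too, `E · (I ⊗ L⁻¹) · D` is a right inverse of `E · (I ⊗ L) · D`.
-/

theorem Matrix.submatrix_val_mul_of_apply_eq_zero {ι κ μ R : Type*} [Fintype ι]
    [NonUnitalNonAssocSemiring R] (p : ι → Prop) [DecidablePred p] (X : Matrix ι ι R)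
    (Y : Matrix ι κ R) (f : μ → κ) (hX : ∀ r q, p r → ¬ p q → X r q = 0) :
    (X * Y).submatrix (Subtype.val : {i // p i} → ι) f =
      X.submatrix (Subtype.val : {i // p i} → ι) Subtype.val *
        Y.submatrix (Subtype.val : {i // p i} → ι) f := by
  ext r c
  have hout : ∑ q : {q // ¬ p q}, X r q * Y q (f c) = 0 :=
    Finset.sum_eq_zero fun q _ => by rw [hX r q r.2 q.2, zero_mul]
  simp only [submatrix_apply, mul_apply]
  rw [← Fintype.sum_subtype_add_sum_subtype p, hout, add_zero]
  rfl

theorem Matrix.one_kronecker_apply_eq_zero_of_isLowerTriangular {m R : Type*} [LinearOrder m]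
    [MulZeroOneClass R] {A : Matrix m m R} (hA : A.IsLowerTriangular) {r q : m × m}
    (hr : r.2 ≤ r.1) (hq : q.1 < q.2) : ((1 : Matrix m m R) ⊗ₖ A) r q = 0 := by
  rw [kroneckerMap_apply, one_apply]
  split_ifs with h
  · rw [hA (hr.trans_lt (h ▸ hq) : r.2 < q.2), mul_zero]
  · rw [zero_mul]

section ElimDup

variable {n : ℕ} {α : Type*}

theorem elimMat_apply (r : SymIdx n) (q : Fin n × Fin n) :
    elimMat n r q = if q = r.val then 1 else 0 := by
  simp only [elimMat, single_apply, Prod.ext_iff]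
  congr 1
  simp only [eq_iff_iff]
  tauto

theorem dupMat_apply (q : Fin n × Fin n) (c : SymIdx n) :
    dupMat n q c = (if q = c.val then 1 else 0) +
      if c.val.1 = c.val.2 then 0 else if q = c.val.swap then 1 else 0 := by
  obtain ⟨⟨k, l⟩, _⟩ := c
  obtain ⟨a, b⟩ := q
  by_cases hkl : k = l <;>
    simp [dupMat, single_apply, hkl, Prod.ext_iff, eq_comm, and_comm, add_comm]

theorem elimMat_mul_apply (X : Matrix (Fin n × Fin n) α ℝ) (r : SymIdx n) (c : α) :
    (elimMat n * X) r c = X r.val c := by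
  simp [mul_apply, elimMat_apply]

theorem mul_dupMat_apply (X : Matrix α (Fin n × Fin n) ℝ) (r : α) (c : SymIdx n) :
    (X * dupMat n) r c = X r c.val + if c.val.1 = c.val.2 then 0 else X r c.val.swap := by
  simp [mul_apply, dupMat_apply, mul_add, Finset.sum_add_distrib]

theorem elimMat_mul_mul_dupMat_eq_submatrix (X : Matrix (Fin n × Fin n) (Fin n × Fin n) ℝ)
    (hX : ∀ r q : Fin n × Fin n, r.2 ≤ r.1 → q.1 < q.2 → X r q = 0) :
    elimMat n * X * dupMat n = X.submatrix Subtype.val Subtype.val := by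
  ext r c
  rw [mul_dupMat_apply, elimMat_mul_apply, elimMat_mul_apply, submatrix_apply]
  split_ifs with hc
  · rw [add_zero]
  · rw [hX r.val c.val.swap r.2 (c.2.lt_of_ne fun h => hc h.symm), add_zero]

theorem elimMat_mul_one_kronecker_mul_dupMat {A : Matrix (Fin n) (Fin n) ℝ}
    (hA : A.IsLowerTriangular) :
    elimMat n * ((1 : Matrix (Fin n) (Fin n) ℝ) ⊗ₖ A) * dupMat n =
      ((1 : Matrix (Fin n) (Fin n) ℝ) ⊗ₖ A).submatrix Subtype.val Subtype.val :=
  elimMat_mul_mul_dupMat_eq_submatrix _ fun _ _ hr hq =>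
    one_kronecker_apply_eq_zero_of_isLowerTriangular hA hr hq

theorem elimMat_kronecker_dupMat_mul {A B : Matrix (Fin n) (Fin n) ℝ}
    (hA : A.IsLowerTriangular) (hB : B.IsLowerTriangular) :
    (elimMat n * ((1 : Matrix (Fin n) (Fin n) ℝ) ⊗ₖ A) * dupMat n) *
        (elimMat n * ((1 : Matrix (Fin n) (Fin n) ℝ) ⊗ₖ B) * dupMat n) =
      elimMat n * ((1 : Matrix (Fin n) (Fin n) ℝ) ⊗ₖ (A * B)) * dupMat n := by
  have hprod : (1 : Matrix (Fin n) (Fin n) ℝ) ⊗ₖ (A * B) =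
      ((1 : Matrix (Fin n) (Fin n) ℝ) ⊗ₖ A) * ((1 : Matrix (Fin n) (Fin n) ℝ) ⊗ₖ B) := by
    rw [← mul_kronecker_mul, mul_one]
  rw [elimMat_mul_one_kronecker_mul_dupMat hA, elimMat_mul_one_kronecker_mul_dupMat hB,
    elimMat_mul_one_kronecker_mul_dupMat (hA.mul hB), hprod]
  exact (submatrix_val_mul_of_apply_eq_zero (fun q : Fin n × Fin n => q.2 ≤ q.1) _ _ _
    fun _ _ hr hq => one_kronecker_apply_eq_zero_of_isLowerTriangular hA hr (not_le.mp hq)).symm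

theorem elimMat_kronecker_dupMat_one :
    elimMat n * ((1 : Matrix (Fin n) (Fin n) ℝ) ⊗ₖ (1 : Matrix (Fin n) (Fin n) ℝ)) * dupMat n =
      1 := by
  rw [elimMat_mul_one_kronecker_mul_dupMat blockTriangular_one, one_kronecker_one]
  exact submatrix_one _ Subtype.val_injective

end ElimDup

/-- For an invertible lower-triangular `L`, `(E · (I ⊗ L) · D)⁻¹ = E · (I ⊗ L⁻¹) · D`. -/
theorem stmt12 {n : ℕ} (L : Matrix (Fin n) (Fin n) ℝ)
    (hL : ∀ i j, i < j → L i j = 0) (hinv : IsUnit L.det) :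
    (elimMat n * ((1 : Matrix (Fin n) (Fin n) ℝ) ⊗ₖ L) * dupMat n)⁻¹ =
      elimMat n * ((1 : Matrix (Fin n) (Fin n) ℝ) ⊗ₖ L⁻¹) * dupMat n := by
  have hL' : L.IsLowerTriangular := fun i j h => hL i j h
  have := L.invertibleOfIsUnitDet hinv
  apply inv_eq_right_inv
  rw [elimMat_kronecker_dupMat_mul hL' (blockTriangular_inv_of_blockTriangular hL'),
    mul_nonsing_inv L hinv, elimMat_kronecker_dupMat_one]
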